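/- If Γ is a 2-tree containing no trefoil subgraph, then BB(Γ) is isomorphic to A(Δ) for some finite simple graph Δ, i.e., BB(Γ) is a right-angled Artin group. -/

import Mathlib

def raagRels {V : Type} (G : SimpleGraph V) : Set (FreeGroup V) :=
  {r | ∃ v w : V, G.Adj v w ∧
    r = FreeGroup.of v * FreeGroup.of w * (FreeGroup.of v)⁻¹ * (FreeGroup.of w)⁻¹}

/-- The right-angled Artin group of a simple graph. -/
abbrev RAAG {V : Type} (G : SimpleGraph V) : Type := PresentedGroup (raagRels G)

/-- The canonical generator of `RAAG G` corresponding to a vertex. -/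
def raagGen {V : Type} (G : SimpleGraph V) (v : V) : RAAG G :=
  PresentedGroup.of (rels := raagRels G) v

/-- The homomorphism `A(Γ) → ℤ` sending every vertex generator to `1`. -/
def bbgChar {V : Type} (G : SimpleGraph V) : RAAG G →* Multiplicative ℤ :=
  PresentedGroup.toGroup (f := fun _ : V => Multiplicative.ofAdd (1 : ℤ)) (by
    rintro r ⟨v, w, -, rfl⟩
    simp only [map_mul, map_inv, FreeGroup.lift_apply_of]
    group)

/-- The Bestvina–Brady group of a simple graph, as a subgroup of the RAAG. -/
def BBG {V : Type} (G : SimpleGraph V) : Subgroup (RAAG G) := (bbgChar G).ker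

/-- A group is a RAAG if it is isomorphic to the RAAG on some finite simple graph. -/
def IsRAAG (H : Type) [Group H] : Prop :=
  ∃ (W : Type) (_ : Fintype W) (Δ : SimpleGraph W), Nonempty (H ≃* RAAG Δ)

/-- Add to `G` a new vertex (`none`) joined exactly to the two vertices `u` and `w`. -/
def addVertexTwoEdges {V : Type} (G : SimpleGraph V) (u w : V) : SimpleGraph (Option V) :=
  SimpleGraph.fromRel (fun x y =>
    (∃ a b : V, x = some a ∧ y = some b ∧ G.Adj a b) ∨
    (x = none ∧ (y = some u ∨ y = some w)))

/-- 2-trees, defined inductively: `K₂` is a 2-tree, and adding a new vertex joined to the two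
endpoints of an existing edge of a 2-tree yields a 2-tree (up to graph isomorphism). -/
inductive Is2Tree : {V : Type} → SimpleGraph V → Prop
  | base : Is2Tree (⊤ : SimpleGraph (Fin 2))
  | extend {V : Type} (G : SimpleGraph V) (u w : V) (huw : G.Adj u w) (hG : Is2Tree G) :
      Is2Tree (addVertexTwoEdges G u w)
  | iso {V W : Type} (G : SimpleGraph V) (H : SimpleGraph W) (hG : Is2Tree G)
      (h : Nonempty (G ≃g H)) : Is2Tree H

/-- `G` contains a trefoil subgraph: an injective map from the six vertices of the trefoil
graph into `G` sending edges to edges. -/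
def ContainsTrefoil {V : Type} (G : SimpleGraph V) : Prop :=
  ∃ a b c x y z : V, Function.Injective ![a, b, c, x, y, z] ∧
    G.Adj a b ∧ G.Adj b c ∧ G.Adj c a ∧ G.Adj x a ∧ G.Adj x b ∧
    G.Adj y b ∧ G.Adj y c ∧ G.Adj z c ∧ G.Adj z a

/-!
A spanning tree `T` of `Γ` is a tree 2-spanner if the endpoints of every edge of `Γ` are at
distance at most two in `T`. Let `Δ` be the graph on the edges of `T`, two of them adjacent when
they span a triangle of `Γ`, and for a vertex `v` let `n_v ∈ A(Δ)` be the product of the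
generators along the tree path from `v` up to the root `r`. Then `v ↦ (n_v, 1)` is an isomorphism
`A(Γ) ≅ A(Δ) ⋊ ℤ`, where `1 ∈ ℤ` acts by the automorphism `q_e ↦ n_p⁻¹ q_e n_p` (`p` the upper
endpoint of `e`), which is conjugation by `r` read in `A(Δ)`. The relations of `A(Γ)` hold
because every edge of `Γ` is a tree edge or closes a triangle with two tree edges; the inverse
sends `q_e` to `v p⁻¹` for the tree edge `e = pv`, and `1 ∈ ℤ` to `r`. The isomorphism turns
`χ_Γ` into the projection to `ℤ`, so `BB(Γ) ≅ A(Δ)`.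

A trefoil-free 2-tree has a tree 2-spanner. Along the inductive construction we prove more: a set
`F` of edges lies in some tree 2-spanner as soon as gluing an apex onto each edge of `F` creates
no trefoil. When a vertex `v` is glued onto the edge `uw`, force `uw` into the tree (its apex is
`v` itself) and hang `v` below `u` or `w`. If both `vu` and `vw` are forced, a second triangle
on `uw`, or an apex over it, would complete a trefoil, so the graph is the triangle `uvw` and the
star at `v` works.
-/

open SemidirectProduct

namespace RAAG

variable {V : Type} {G : SimpleGraph V} {H : Type} [Group H]

theorem commute_raagGen {v w : V} (h : G.Adj v w) : Commute (raagGen G v) (raagGen G w) := by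
  rw [← commutatorElement_eq_one_iff_commute, commutatorElement_def]
  simpa [raagGen, PresentedGroup.of] using
    PresentedGroup.one_of_mem (rels := raagRels G) ⟨v, w, h, rfl⟩

theorem commute_raagGen_of_mem_clique {s : Set V} (hs : G.IsClique s) {v w : V} (hv : v ∈ s)
    (hw : w ∈ s) : Commute (raagGen G v) (raagGen G w) := by
  obtain rfl | hvw := eq_or_ne v w
  · exact Commute.refl _
  · exact commute_raagGen (hs hv hw hvw)

def lift (f : V → H) (hf : ∀ v w, G.Adj v w → Commute (f v) (f w)) : RAAG G →* H :=
  PresentedGroup.toGroup (f := f) (by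
    rintro _ ⟨v, w, hvw, rfl⟩
    simpa [commutatorElement_def] using (hf v w hvw).commutator_eq)

@[simp]
theorem lift_raagGen (f : V → H) (hf : ∀ v w, G.Adj v w → Commute (f v) (f w)) (v : V) :
    lift f hf (raagGen G v) = f v :=
  PresentedGroup.toGroup.of _

@[ext]
theorem hom_ext {φ ψ : RAAG G →* H} (h : ∀ v, φ (raagGen G v) = ψ (raagGen G v)) : φ = ψ :=
  PresentedGroup.ext h

end RAAG

@[simp]
theorem bbgChar_raagGen {V : Type} (G : SimpleGraph V) (v : V) :
    bbgChar G (raagGen G v) = Multiplicative.ofAdd 1 :=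
  PresentedGroup.toGroup.of _

theorem MonoidHom.map_mulAut_zpow_apply {M N : Type} [Group M] [Group N] (f : M →* N)
    {σ : MulAut M} {τ : MulAut N} (h : ∀ x, f (σ x) = τ (f x)) (k : ℤ) (x : M) :
    f ((σ ^ k) x) = (τ ^ k) (f x) := by
  have h_inv : ∀ x, f (σ⁻¹ x) = τ⁻¹ (f x) := fun x => by
    rw [MulAut.inv_apply, MulAut.inv_apply, MulEquiv.eq_symm_apply, ← h,
      MulEquiv.apply_symm_apply]
  induction k using Int.induction_on generalizing x with
  | zero => rfl
  | succ k ih => rw [zpow_add_one, zpow_add_one, MulAut.mul_apply, MulAut.mul_apply, ih, h]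
  | pred k ih => rw [zpow_sub_one, zpow_sub_one, MulAut.mul_apply, MulAut.mul_apply, ih, h_inv]

noncomputable def MonoidHom.kerEquivOfSemidirectProduct {G N K : Type} [Group G] [Group N]
    [Group K] {φ : K →* MulAut N} (χ : G →* K) (e : G ≃* N ⋊[φ] K)
    (he : ∀ x, rightHom (e x) = χ x) : χ.ker ≃* N :=
  have hker : χ.ker.map e.toMonoidHom = (SemidirectProduct.inl : N →* N ⋊[φ] K).range := by
    rw [range_inl_eq_ker_rightHom, ← show rightHom.comp e.toMonoidHom = χ from ext he,
      ← MonoidHom.comap_ker, Subgroup.map_comap_eq_self_of_surjective e.surjective]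
  (e.subgroupMap χ.ker).trans ((MulEquiv.subgroupCongr hker).trans
    (MonoidHom.ofInjective SemidirectProduct.inl_injective).symm)

namespace SimpleGraph

variable {V : Type}

/-- `depth` certifies that iterating `parent` reaches `root`. -/
structure RootedSpanningTree (G : SimpleGraph V) where
  root : V
  parent : V → V
  depth : V → ℕ
  adj_parent : ∀ z, z ≠ root → G.Adj (parent z) z
  depth_parent : ∀ z, z ≠ root → depth z = depth (parent z) + 1

namespace RootedSpanningTree

variable {G : SimpleGraph V} (T : G.RootedSpanningTree)

def graph : SimpleGraph V := fromRel fun x y => x ≠ T.root ∧ T.parent x = y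

def IsTwoSpanner : Prop :=
  ∀ x y, G.Adj x y → T.graph.Adj x y ∨ ∃ s, T.graph.Adj x s ∧ T.graph.Adj s y

theorem graph_le : T.graph ≤ G := by
  rintro x y ⟨-, ⟨hx, rfl⟩ | ⟨hy, rfl⟩⟩
  · exact (T.adj_parent x hx).symm
  · exact T.adj_parent y hy

theorem depth_parent_lt {z : V} (hz : z ≠ T.root) : T.depth (T.parent z) < T.depth z := by
  rw [T.depth_parent z hz]
  exact Nat.lt_succ_self _

theorem induction {P : V → Prop} (root : P T.root)
    (parent : ∀ z, z ≠ T.root → P (T.parent z) → P z) (z : V) : P z := by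
  induction hd : T.depth z using Nat.strong_induction_on generalizing z with
  | _ n ih =>
    by_cases hz : z = T.root
    · exact hz ▸ root
    · exact parent z hz (ih _ (hd ▸ T.depth_parent_lt hz) _ rfl)

/-- The tree edges, each indexed by its endpoint farther from the root. -/
abbrev NonRoot : Type := {z : V // z ≠ T.root}

def ends (w : T.NonRoot) : Set V := {T.parent w, (w : V)}

/-- The graph `Δ`: tree edges, adjacent when they span a triangle of `G`. -/
def triangleGraph : SimpleGraph T.NonRoot where
  Adj w w' := w ≠ w' ∧ (T.ends w ∩ T.ends w').Nonempty ∧ G.IsClique (T.ends w ∪ T.ends w')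
  symm := ⟨fun _ _ ⟨hne, hint, hcl⟩ =>
    ⟨hne.symm, Set.inter_comm _ _ ▸ hint, Set.union_comm _ _ ▸ hcl⟩⟩
  loopless := ⟨fun _ h => h.1 rfl⟩

def toRAAG : RAAG T.triangleGraph →* RAAG G :=
  RAAG.lift (fun w => raagGen G w * (raagGen G (T.parent w))⁻¹) fun w w' h => by
    have hcomm {a b : V} (ha : a ∈ T.ends w) (hb : b ∈ T.ends w') :=
      RAAG.commute_raagGen_of_mem_clique h.2.2 (Or.inl ha) (Or.inr hb)
    have hw : (w : V) ∈ T.ends w := Or.inr rfl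
    have hp : T.parent w ∈ T.ends w := Or.inl rfl
    have hw' : (w' : V) ∈ T.ends w' := Or.inr rfl
    have hp' : T.parent w' ∈ T.ends w' := Or.inl rfl
    exact ((hcomm hw hw').mul_right (hcomm hw hp').inv_right).mul_left
      ((hcomm hp hw').mul_right (hcomm hp hp').inv_right).inv_left

@[simp]
theorem toRAAG_raagGen (w : T.NonRoot) :
    T.toRAAG (raagGen _ w) = raagGen G w * (raagGen G (T.parent w))⁻¹ :=
  RAAG.lift_raagGen _ _ _

variable [DecidableEq V]

def rootWord (z : V) : RAAG T.triangleGraph :=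
  if h : z = T.root then 1 else raagGen _ ⟨z, h⟩ * rootWord (T.parent z)
termination_by T.depth z
decreasing_by exact T.depth_parent_lt h

def rootWordRev (z : V) : RAAG T.triangleGraph :=
  if h : z = T.root then 1 else rootWordRev (T.parent z) * raagGen _ ⟨z, h⟩
termination_by T.depth z
decreasing_by exact T.depth_parent_lt h

@[simp]
theorem rootWord_root : T.rootWord T.root = 1 := by
  rw [rootWord, dif_pos rfl]

theorem rootWord_of_ne_root {z : V} (hz : z ≠ T.root) :
    T.rootWord z = raagGen _ ⟨z, hz⟩ * T.rootWord (T.parent z) := by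
  rw [rootWord, dif_neg hz]

@[simp]
theorem rootWordRev_root : T.rootWordRev T.root = 1 := by
  rw [rootWordRev, dif_pos rfl]

theorem rootWordRev_of_ne_root {z : V} (hz : z ≠ T.root) :
    T.rootWordRev z = T.rootWordRev (T.parent z) * raagGen _ ⟨z, hz⟩ := by
  rw [rootWordRev, dif_neg hz]

def shiftGen (w : T.NonRoot) : RAAG T.triangleGraph :=
  (T.rootWord (T.parent w))⁻¹ * raagGen _ w * T.rootWord (T.parent w)

def unshiftGen (w : T.NonRoot) : RAAG T.triangleGraph :=
  T.rootWordRev (T.parent w) * raagGen _ w * (T.rootWordRev (T.parent w))⁻¹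

theorem shiftGen_eq_of_mem_ends {w : T.NonRoot} {s : V} (hs : s ∈ T.ends w) :
    T.shiftGen w = (T.rootWord s)⁻¹ * raagGen _ w * T.rootWord s := by
  rcases hs with rfl | rfl
  · rfl
  · rw [shiftGen, T.rootWord_of_ne_root w.2]
    group

theorem unshiftGen_eq_of_mem_ends {w : T.NonRoot} {s : V} (hs : s ∈ T.ends w) :
    T.unshiftGen w = T.rootWordRev s * raagGen _ w * (T.rootWordRev s)⁻¹ := by
  rcases hs with rfl | rfl
  · rfl
  · rw [unshiftGen, T.rootWordRev_of_ne_root w.2]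
    group

def shift : RAAG T.triangleGraph →* RAAG T.triangleGraph :=
  RAAG.lift T.shiftGen fun w w' h => by
    obtain ⟨s, hs, hs'⟩ := h.2.1
    rw [T.shiftGen_eq_of_mem_ends hs, T.shiftGen_eq_of_mem_ends hs']
    simpa using (RAAG.commute_raagGen h).map (MulAut.conj (T.rootWord s)⁻¹)

def unshift : RAAG T.triangleGraph →* RAAG T.triangleGraph :=
  RAAG.lift T.unshiftGen fun w w' h => by
    obtain ⟨s, hs, hs'⟩ := h.2.1
    rw [T.unshiftGen_eq_of_mem_ends hs, T.unshiftGen_eq_of_mem_ends hs']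
    exact (RAAG.commute_raagGen h).map (MulAut.conj (T.rootWordRev s))

@[simp]
theorem shift_raagGen (w : T.NonRoot) : T.shift (raagGen _ w) = T.shiftGen w :=
  RAAG.lift_raagGen _ _ _

@[simp]
theorem unshift_raagGen (w : T.NonRoot) : T.unshift (raagGen _ w) = T.unshiftGen w :=
  RAAG.lift_raagGen _ _ _

theorem shift_rootWordRev (z : V) : T.shift (T.rootWordRev z) = T.rootWord z := by
  induction z using T.induction with
  | root => simp
  | parent z hz ih =>
    rw [T.rootWordRev_of_ne_root hz, T.rootWord_of_ne_root hz, map_mul, ih, shift_raagGen,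
      shiftGen]
    group

theorem unshift_rootWord (z : V) : T.unshift (T.rootWord z) = T.rootWordRev z := by
  induction z using T.induction with
  | root => simp
  | parent z hz ih =>
    rw [T.rootWordRev_of_ne_root hz, T.rootWord_of_ne_root hz, map_mul, ih, unshift_raagGen,
      unshiftGen]
    group

theorem unshift_shift (x : RAAG T.triangleGraph) : T.unshift (T.shift x) = x := by
  suffices T.unshift.comp T.shift = MonoidHom.id _ from DFunLike.congr_fun this x
  ext w
  simp only [MonoidHom.comp_apply, shift_raagGen, shiftGen, map_mul, map_inv, unshift_rootWord,
    unshift_raagGen, unshiftGen, MonoidHom.id_apply]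
  group

theorem shift_unshift (x : RAAG T.triangleGraph) : T.shift (T.unshift x) = x := by
  suffices T.shift.comp T.unshift = MonoidHom.id _ from DFunLike.congr_fun this x
  ext w
  simp only [MonoidHom.comp_apply, unshift_raagGen, unshiftGen, map_mul, map_inv,
    shift_rootWordRev, shift_raagGen, shiftGen, MonoidHom.id_apply]
  group

def shiftEquiv : MulAut (RAAG T.triangleGraph) :=
  { T.shift with
    invFun := T.unshift
    left_inv := T.unshift_shift
    right_inv := T.shift_unshift }

def action : Multiplicative ℤ →* MulAut (RAAG T.triangleGraph) :=
  zpowersHom _ T.shiftEquiv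

abbrev Split : Type := RAAG T.triangleGraph ⋊[T.action] Multiplicative ℤ

def splitGen (v : V) : T.Split := inl (T.rootWord v) * inr (.ofAdd 1)

theorem inr_ofAdd_one_mul_inl (a : RAAG T.triangleGraph) :
    (inr (.ofAdd 1) * inl a : T.Split) = inl (T.shift a) * inr (.ofAdd 1) := by
  have : T.action (.ofAdd 1) a = T.shift a := by simp [action, shiftEquiv]
  rw [← this, inl_aut, map_inv, inv_mul_cancel_right]

theorem splitGen_nonRoot (w : T.NonRoot) :
    T.splitGen w = inl (raagGen _ w) * T.splitGen (T.parent w) := by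
  rw [splitGen, splitGen, T.rootWord_of_ne_root w.2, map_mul, mul_assoc]

theorem commute_inl_raagGen_splitGen {w : T.NonRoot} {s : V} (hs : s ∈ T.ends w) :
    Commute (inl (raagGen _ w)) (T.splitGen s) := by
  have hconj : T.rootWord s * T.shift (raagGen _ w) = raagGen _ w * T.rootWord s := by
    rw [shift_raagGen, T.shiftGen_eq_of_mem_ends hs]
    group
  rw [Commute, SemiconjBy, splitGen, mul_assoc, inr_ofAdd_one_mul_inl, ← mul_assoc, ← mul_assoc,
    ← map_mul, ← map_mul, hconj]

theorem exists_splitGen_eq_of_adj {x s : V} (h : T.graph.Adj x s) :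
    ∃ (w : T.NonRoot) (k : ℤ), T.ends w = {x, s} ∧
      T.splitGen x = inl (raagGen _ w ^ k) * T.splitGen s := by
  rcases h with ⟨-, ⟨hx, rfl⟩ | ⟨hs, rfl⟩⟩
  · exact ⟨⟨x, hx⟩, 1, Set.pair_comm _ _, by rw [zpow_one, ← splitGen_nonRoot]⟩
  · refine ⟨⟨s, hs⟩, -1, rfl, ?_⟩
    rw [T.splitGen_nonRoot ⟨s, hs⟩, zpow_neg_one, map_inv, inv_mul_cancel_left]

theorem triangleGraph_adj_of_ends {x y s : V} (h : G.Adj x y) (hxs : T.graph.Adj x s)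
    (hsy : T.graph.Adj s y) {w w' : T.NonRoot} (hw : T.ends w = {x, s}) (hw' : T.ends w' = {y, s}) :
    T.triangleGraph.Adj w w' := by
  refine ⟨fun hww' => h.ne ?_, ⟨s, by simp [hw, hw']⟩, ?_⟩
  · have hends : ({x, s} : Set V) = {y, s} := hw ▸ hw' ▸ congrArg T.ends hww'
    rcases Set.pair_eq_pair_iff.1 hends with ⟨hxy, -⟩ | ⟨hxs, hsy⟩
    exacts [hxy, hxs.trans hsy]
  · rw [hw, hw']
    refine (is3Clique_triple_iff.2 ⟨h, T.graph_le hxs, T.graph_le hsy.symm⟩).isClique.subset ?_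
    intro a
    simp only [Set.mem_union, Set.mem_insert_iff, Set.mem_singleton_iff, Finset.coe_insert,
      Finset.coe_singleton]
    tauto

theorem commute_splitGen (hT : T.IsTwoSpanner) {x y : V} (h : G.Adj x y) :
    Commute (T.splitGen x) (T.splitGen y) := by
  rcases hT x y h with hxy | ⟨s, hxs, hsy⟩
  · obtain ⟨w, k, hw, hx⟩ := T.exists_splitGen_eq_of_adj hxy
    rw [hx, map_zpow]
    refine .mul_left ((T.commute_inl_raagGen_splitGen ?_).zpow_left k) (.refl _)
    simp [hw]
  obtain ⟨w, k, hw, hx⟩ := T.exists_splitGen_eq_of_adj hxs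
  obtain ⟨w', k', hw', hy⟩ := T.exists_splitGen_eq_of_adj hsy.symm
  have hadj := T.triangleGraph_adj_of_ends h hxs hsy hw hw'
  have hgen : Commute (inl (raagGen _ w ^ k) : T.Split) (inl (raagGen _ w' ^ k')) :=
    ((RAAG.commute_raagGen hadj).zpow_zpow k k').map inl
  have hws : Commute (inl (raagGen _ w ^ k) : T.Split) (T.splitGen s) := by
    rw [map_zpow]; exact (T.commute_inl_raagGen_splitGen (by simp [hw])).zpow_left k
  have hw's : Commute (inl (raagGen _ w' ^ k') : T.Split) (T.splitGen s) := by
    rw [map_zpow]; exact (T.commute_inl_raagGen_splitGen (by simp [hw'])).zpow_left k'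
  rw [hx, hy]
  exact (hgen.mul_right hws).mul_left (hw's.symm.mul_right (.refl _))

def toSplit (hT : T.IsTwoSpanner) : RAAG G →* T.Split :=
  RAAG.lift T.splitGen fun _ _ => T.commute_splitGen hT

theorem toRAAG_rootWord (z : V) :
    T.toRAAG (T.rootWord z) = raagGen G z * (raagGen G T.root)⁻¹ := by
  induction z using T.induction with
  | root => simp
  | parent z hz ih =>
    rw [T.rootWord_of_ne_root hz, map_mul, ih, toRAAG_raagGen]
    group

theorem toRAAG_shift (x : RAAG T.triangleGraph) :
    T.toRAAG (T.shift x) = MulAut.conj (raagGen G T.root) (T.toRAAG x) := by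
  suffices T.toRAAG.comp T.shift = (MulAut.conj (raagGen G T.root)).toMonoidHom.comp T.toRAAG
    from DFunLike.congr_fun this x
  ext w
  calc T.toRAAG (T.shift (raagGen _ w))
      = raagGen G T.root * ((raagGen G (T.parent w))⁻¹ * raagGen G w) * (raagGen G T.root)⁻¹ := by
        rw [shift_raagGen, shiftGen, map_mul, map_mul, map_inv, toRAAG_rootWord, toRAAG_raagGen]
        group
    _ = raagGen G T.root * (raagGen G w * (raagGen G (T.parent w))⁻¹) * (raagGen G T.root)⁻¹ := by
        rw [(RAAG.commute_raagGen (T.adj_parent w w.2)).inv_left.eq]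
    _ = MulAut.conj (raagGen G T.root) (T.toRAAG (raagGen _ w)) := by
        rw [toRAAG_raagGen, MulAut.conj_apply]

def fromSplit : T.Split →* RAAG G :=
  SemidirectProduct.lift T.toRAAG (zpowersHom _ (raagGen G T.root)) fun k => by
    refine MonoidHom.ext fun x => ?_
    simpa [action, map_zpow] using
      T.toRAAG.map_mulAut_zpow_apply T.toRAAG_shift k.toAdd x

theorem fromSplit_toSplit (hT : T.IsTwoSpanner) (x : RAAG G) :
    T.fromSplit (T.toSplit hT x) = x := by
  suffices T.fromSplit.comp (T.toSplit hT) = MonoidHom.id _ from DFunLike.congr_fun this x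
  ext v
  simp [toSplit, fromSplit, splitGen, toRAAG_rootWord]

theorem toSplit_fromSplit (hT : T.IsTwoSpanner) (x : T.Split) :
    T.toSplit hT (T.fromSplit x) = x := by
  suffices (T.toSplit hT).comp T.fromSplit = MonoidHom.id _ from DFunLike.congr_fun this x
  refine SemidirectProduct.hom_ext (RAAG.hom_ext fun w => ?_) (MonoidHom.ext_mint ?_)
  · simp [toSplit, fromSplit, splitGen_nonRoot]
  · simp [toSplit, fromSplit, splitGen]

def splitEquiv (hT : T.IsTwoSpanner) : RAAG G ≃* T.Split where
  __ := T.toSplit hT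
  invFun := T.fromSplit
  left_inv := T.fromSplit_toSplit hT
  right_inv := T.toSplit_fromSplit hT

theorem rightHom_splitEquiv (hT : T.IsTwoSpanner) (x : RAAG G) :
    rightHom (T.splitEquiv hT x) = bbgChar G x := by
  suffices rightHom.comp (T.toSplit hT) = bbgChar G from DFunLike.congr_fun this x
  ext v
  simp [toSplit, splitGen]

noncomputable def bbgEquiv (hT : T.IsTwoSpanner) : BBG G ≃* RAAG T.triangleGraph :=
  MonoidHom.kerEquivOfSemidirectProduct (bbgChar G) (T.splitEquiv hT) (T.rightHom_splitEquiv hT)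

end RootedSpanningTree

theorem RootedSpanningTree.IsTwoSpanner.isRAAG_bbg {V : Type} [Fintype V] {G : SimpleGraph V}
    {T : G.RootedSpanningTree} (hT : T.IsTwoSpanner) : IsRAAG (BBG G) := by
  classical
  exact ⟨T.NonRoot, inferInstance, T.triangleGraph, ⟨T.bbgEquiv hT⟩⟩

end SimpleGraph

section

open SimpleGraph

variable {V W : Type}

section addVertexTwoEdges

variable {G : SimpleGraph V} {u w a b : V}

@[simp]
theorem addVertexTwoEdges_adj_some_some :
    (addVertexTwoEdges G u w).Adj (some a) (some b) ↔ G.Adj a b := by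
  simp only [addVertexTwoEdges, fromRel_adj, ne_eq, Option.some.injEq, reduceCtorEq, false_and,
    or_false, exists_and_left, exists_eq_left', G.adj_comm b a, or_self]
  exact ⟨And.right, fun h => ⟨h.ne, h⟩⟩

@[simp]
theorem addVertexTwoEdges_adj_none_some :
    (addVertexTwoEdges G u w).Adj none (some a) ↔ a = u ∨ a = w := by
  simp [addVertexTwoEdges]

@[simp]
theorem addVertexTwoEdges_adj_some_none :
    (addVertexTwoEdges G u w).Adj (some a) none ↔ a = u ∨ a = w := by
  rw [adj_comm, addVertexTwoEdges_adj_none_some]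

end addVertexTwoEdges

theorem Is2Tree.exists_common_neighbor_or_eq {G : SimpleGraph V} (hG : Is2Tree G) {u w : V}
    (huw : G.Adj u w) : (∃ x, G.Adj u x ∧ G.Adj w x) ∨ ∀ z, z = u ∨ z = w := by
  induction hG with
  | base =>
    right
    intro z
    fin_cases z <;> fin_cases u <;> fin_cases w <;> simp_all
  | extend G a b hab hG ih =>
    left
    match u, w with
    | none, none => exact absurd huw (SimpleGraph.irrefl _)
    | none, some w =>
      obtain rfl | rfl := addVertexTwoEdges_adj_none_some.1 huw
      · exact ⟨some b, by simp, by simpa⟩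
      · exact ⟨some a, by simp, by simpa using hab.symm⟩
    | some u, none =>
      obtain rfl | rfl := addVertexTwoEdges_adj_some_none.1 huw
      · exact ⟨some b, by simpa, by simp⟩
      · exact ⟨some a, by simpa using hab.symm, by simp⟩
    | some u, some w =>
      rcases ih (addVertexTwoEdges_adj_some_some.1 huw) with ⟨x, hux, hwx⟩ | hV
      · exact ⟨some x, by simpa, by simpa⟩
      · refine ⟨none, ?_, ?_⟩ <;> simp only [addVertexTwoEdges_adj_some_none] <;>
          rcases hV a with rfl | rfl <;> rcases hV b with rfl | rfl <;> simp_all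
  | iso G H hG e ih =>
    obtain ⟨e⟩ := e
    rcases ih (e.symm.map_adj_iff.2 huw) with ⟨x, hux, hwx⟩ | hV
    · exact .inl ⟨e x, by simpa using e.map_adj_iff.2 hux, by simpa using e.map_adj_iff.2 hwx⟩
    · exact .inr fun z => by simpa [e.symm_apply_eq] using hV (e.symm z)

theorem ContainsTrefoil.map {G : SimpleGraph V} {H : SimpleGraph W} (f : G →g H)
    (hf : Function.Injective f) : ContainsTrefoil G → ContainsTrefoil H := by
  rintro ⟨a, b, c, x, y, z, hinj, hab, hbc, hca, hxa, hxb, hyb, hyc, hzc, hza⟩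
  refine ⟨f a, f b, f c, f x, f y, f z, ?_, f.map_adj hab, f.map_adj hbc, f.map_adj hca,
    f.map_adj hxa, f.map_adj hxb, f.map_adj hyb, f.map_adj hyc, f.map_adj hzc, f.map_adj hza⟩
  convert hf.comp hinj using 1
  ext i
  fin_cases i <;> rfl

theorem ContainsTrefoil.of_map {G : SimpleGraph V} (f : V ↪ W) :
    ContainsTrefoil (G.map f) → ContainsTrefoil G := by
  rintro ⟨a, b, c, x, y, z, hinj, hab, hbc, hca, hxa, hxb, hyb, hyc, hzc, hza⟩
  obtain ⟨a, b, -, rfl, rfl⟩ := (map_adj f G _ _).1 hab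
  obtain ⟨-, c, -, -, rfl⟩ := (map_adj f G _ _).1 hbc
  obtain ⟨x, -, -, rfl, -⟩ := (map_adj f G _ _).1 hxa
  obtain ⟨y, -, -, rfl, -⟩ := (map_adj f G _ _).1 hyb
  obtain ⟨z, -, -, rfl, -⟩ := (map_adj f G _ _).1 hzc
  simp only [map_adj_apply] at hab hbc hca hxa hxb hyb hyc hzc hza
  refine ⟨a, b, c, x, y, z, ?_, hab, hbc, hca, hxa, hxb, hyb, hyc, hzc, hza⟩
  refine Function.Injective.of_comp (f := f) ?_
  convert hinj using 1
  ext i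
  fin_cases i <;> rfl

end

namespace SimpleGraph

variable {V W : Type}

def attachApexes (G : SimpleGraph V) (F : Set (Sym2 V)) : SimpleGraph (V ⊕ Sym2 V) where
  Adj
    | .inl a, .inl b => G.Adj a b
    | .inl a, .inr e | .inr e, .inl a => e ∈ F ∧ a ∈ e
    | .inr _, .inr _ => False
  symm := ⟨by rintro (a | e) (b | e') h <;> simp_all [adj_comm]⟩
  loopless := ⟨by rintro (a | e) h <;> simp_all⟩

section attachApexes

variable {G : SimpleGraph V} {F : Set (Sym2 V)}

@[simp]
theorem attachApexes_adj_inl_inl {a b : V} :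
    (G.attachApexes F).Adj (.inl a) (.inl b) ↔ G.Adj a b := Iff.rfl

@[simp]
theorem attachApexes_adj_inl_inr {a : V} {e : Sym2 V} :
    (G.attachApexes F).Adj (.inl a) (.inr e) ↔ e ∈ F ∧ a ∈ e := Iff.rfl

@[simp]
theorem attachApexes_adj_inr_inl {a : V} {e : Sym2 V} :
    (G.attachApexes F).Adj (.inr e) (.inl a) ↔ e ∈ F ∧ a ∈ e := Iff.rfl

@[simp]
theorem not_attachApexes_adj_inr_inr {e e' : Sym2 V} :
    ¬(G.attachApexes F).Adj (.inr e) (.inr e') := id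

theorem attachApexes_empty : G.attachApexes ∅ = G.map (.inl : V ↪ V ⊕ Sym2 V) := by
  ext (a | e) (b | e') <;> simp [map_adj]

def attachApexesHom {H : SimpleGraph W} (f : G →g H) (F' : Set (Sym2 W)) :
    G.attachApexes {e | e.map f ∈ F'} →g H.attachApexes F' where
  toFun := Sum.map f (Sym2.map f)
  map_rel' {x y} h := by
    rcases x with a | e <;> rcases y with b | e'
    · exact f.map_adj h
    · exact ⟨h.1, Sym2.mem_map.2 ⟨a, h.2, rfl⟩⟩
    · exact ⟨h.1, Sym2.mem_map.2 ⟨b, h.2, rfl⟩⟩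
    · exact h.elim

end attachApexes

namespace RootedSpanningTree

def topFinTwo : (⊤ : SimpleGraph (Fin 2)).RootedSpanningTree where
  root := 0
  parent _ := 0
  depth z := z
  adj_parent _ hz := (top_adj _ _).2 (Ne.symm hz)
  depth_parent z hz := by fin_cases z <;> simp_all

theorem topFinTwo_graph : topFinTwo.graph = ⊤ := by
  ext x y
  fin_cases x <;> fin_cases y <;> simp [graph, topFinTwo]

variable {G : SimpleGraph V} (T : G.RootedSpanningTree)

section map

variable {H : SimpleGraph W} (e : G ≃g H)

def map : H.RootedSpanningTree where
  root := e T.root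
  parent z := e (T.parent (e.symm z))
  depth z := T.depth (e.symm z)
  adj_parent z hz := by
    simpa using e.map_adj_iff.2 (T.adj_parent (e.symm z) (by rwa [ne_eq, e.symm_apply_eq]))
  depth_parent z hz := by simpa using T.depth_parent (e.symm z) (by rwa [ne_eq, e.symm_apply_eq])

@[simp]
theorem map_graph_adj {x y : V} : (T.map e).graph.Adj (e x) (e y) ↔ T.graph.Adj x y := by
  simp [graph, map]

theorem IsTwoSpanner.map {T : G.RootedSpanningTree} (hT : T.IsTwoSpanner) :
    (T.map e).IsTwoSpanner := by
  intro x y hxy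
  obtain ⟨x, rfl⟩ := e.surjective x
  obtain ⟨y, rfl⟩ := e.surjective y
  rcases hT x y (e.map_adj_iff.1 hxy) with h | ⟨s, hxs, hsy⟩
  · exact .inl ((T.map_graph_adj e).2 h)
  · exact .inr ⟨e s, (T.map_graph_adj e).2 hxs, (T.map_graph_adj e).2 hsy⟩

end map

section extend

variable {u w e₀ : V} (he₀ : e₀ = u ∨ e₀ = w)

def extend : (addVertexTwoEdges G u w).RootedSpanningTree where
  root := some T.root
  parent z := z.elim (some e₀) (some ∘ T.parent)
  depth z := z.elim (T.depth e₀ + 1) T.depth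
  adj_parent
    | none, _ => by simpa using he₀
    | some z, hz => by simpa using T.adj_parent z (by simpa using hz)
  depth_parent
    | none, _ => rfl
    | some z, hz => T.depth_parent z (by simpa using hz)

@[simp]
theorem extend_graph_adj_some_some {a b : V} :
    (T.extend he₀).graph.Adj (some a) (some b) ↔ T.graph.Adj a b := by
  simp [graph, extend]

@[simp]
theorem extend_graph_adj_none_some {a : V} : (T.extend he₀).graph.Adj none (some a) ↔ a = e₀ := by
  simp [graph, extend, eq_comm]

theorem IsTwoSpanner.extend {T : G.RootedSpanningTree} (hT : T.IsTwoSpanner)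
    (huw : T.graph.Adj u w) : (T.extend he₀).IsTwoSpanner := by
  have hnew : ∀ b, b = u ∨ b = w → (T.extend he₀).graph.Adj none (some b) ∨
      ∃ s, (T.extend he₀).graph.Adj none s ∧ (T.extend he₀).graph.Adj s (some b) := by
    intro b hb
    by_cases hbe : b = e₀
    · exact .inl ((T.extend_graph_adj_none_some he₀).2 hbe)
    refine .inr ⟨some e₀, (T.extend_graph_adj_none_some he₀).2 rfl, ?_⟩
    rw [extend_graph_adj_some_some]
    rcases he₀ with rfl | rfl <;> rcases hb with rfl | rfl
    exacts [(hbe rfl).elim, huw, huw.symm, (hbe rfl).elim]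
  rintro (_ | a) (_ | b) hab
  · exact (hab.ne rfl).elim
  · exact hnew b (by simpa using hab)
  · exact (hnew a (by simpa using hab)).imp .symm fun ⟨s, h₁, h₂⟩ => ⟨s, h₂.symm, h₁.symm⟩
  · rcases hT a b (by simpa using hab) with h | ⟨s, hs, hs'⟩
    · exact .inl (by simpa using h)
    · exact .inr ⟨some s, by simpa using hs, by simpa using hs'⟩

end extend

section star

variable {u w : V} (hV : ∀ z, z = u ∨ z = w)

def star : (addVertexTwoEdges G u w).RootedSpanningTree where
  root := none
  parent _ := none
  depth z := z.elim 0 fun _ => 1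
  adj_parent
    | none, h => (h rfl).elim
    | some z, _ => by simpa using hV z
  depth_parent
    | none, h => (h rfl).elim
    | some _, _ => rfl

@[simp]
theorem star_graph_adj_none_some {a : V} : (star (G := G) hV).graph.Adj none (some a) := by
  simp [graph, star]

theorem isTwoSpanner_star : (star (G := G) hV).IsTwoSpanner := by
  rintro (_ | a) (_ | b) hab
  · exact (hab.ne rfl).elim
  · exact .inl (by simp)
  · exact .inl (by simp [adj_comm])
  · exact .inr ⟨none, by simp [adj_comm], by simp⟩

end star

end RootedSpanningTree

def ForcedTwoSpanners (G : SimpleGraph V) : Prop :=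
  ∀ F ⊆ G.edgeSet, ¬ContainsTrefoil (G.attachApexes F) →
    ∃ T : G.RootedSpanningTree, T.IsTwoSpanner ∧ F ⊆ T.graph.edgeSet

theorem forcedTwoSpanners_top_fin_two : ForcedTwoSpanners (⊤ : SimpleGraph (Fin 2)) := by
  intro F hF _
  refine ⟨.topFinTwo, fun x y h => .inl ?_, ?_⟩ <;> rw [RootedSpanningTree.topFinTwo_graph]
  exacts [h, hF]

theorem ForcedTwoSpanners.of_iso {G : SimpleGraph V} {H : SimpleGraph W} (e : G ≃g H)
    (hG : ForcedTwoSpanners G) : ForcedTwoSpanners H := by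
  intro F hF htre
  have hinj : Function.Injective (attachApexesHom e.toHom F) :=
    Sum.map_injective.2 ⟨e.injective, Sym2.map.injective e.injective⟩
  have hF' : {x | x.map e ∈ F} ⊆ G.edgeSet := fun x hx => by
    induction x using Sym2.ind with | h a b => simpa using e.map_adj_iff.1 (by simpa using hF hx)
  obtain ⟨T, hT, hFT⟩ := hG _ hF' fun h => htre (.map _ hinj h)
  refine ⟨T.map e, hT.map e, fun x hx => ?_⟩
  induction x using Sym2.ind with | h a b => ?_
  obtain ⟨a, rfl⟩ := e.surjective a
  obtain ⟨b, rfl⟩ := e.surjective b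
  exact (T.map_graph_adj e).2 (hFT (show s(a, b).map e ∈ F by simpa using hx))

theorem containsTrefoil_attachApexes_addVertexTwoEdges {G : SimpleGraph V} {u w : V}
    {F : Set (Sym2 (Option V))} (huw : G.Adj u w) (hu : s(none, some u) ∈ F)
    (hw : s(none, some w) ∈ F) {z : Option V ⊕ Sym2 (Option V)} (hz : z ≠ .inl none)
    (hzu : ((addVertexTwoEdges G u w).attachApexes F).Adj z (.inl (some u)))
    (hzw : ((addVertexTwoEdges G u w).attachApexes F).Adj z (.inl (some w))) :
    ContainsTrefoil ((addVertexTwoEdges G u w).attachApexes F) := by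
  have hzu' : z ≠ .inr s(none, some u) := by
    rintro rfl
    simp [huw.ne.symm] at hzw
  have hzw' : z ≠ .inr s(none, some w) := by
    rintro rfl
    simp [huw.ne] at hzu
  refine ⟨.inl (some u), .inl none, .inl (some w), .inr s(none, some u), .inr s(none, some w), z,
    List.nodup_ofFn.1 ?_, by simp, by simp, by simpa using huw.symm, by simp [hu], by simp [hu],
    by simp [hw], by simp [hw], hzw, hzu⟩
  simp [huw.ne, hz.symm, hzu.ne.symm, hzw.ne.symm, hzu'.symm, hzw'.symm]

section addVertexTwoEdges

variable {G : SimpleGraph V} {u w : V} {F : Set (Sym2 (Option V))}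

theorem exists_twoSpanner_addVertexTwoEdges_of_mem_mem (hG : Is2Tree G) (huw : G.Adj u w)
    (hF : F ⊆ (addVertexTwoEdges G u w).edgeSet)
    (htre : ¬ContainsTrefoil ((addVertexTwoEdges G u w).attachApexes F))
    (hu : s(none, some u) ∈ F) (hw : s(none, some w) ∈ F) :
    ∃ T : (addVertexTwoEdges G u w).RootedSpanningTree, T.IsTwoSpanner ∧ F ⊆ T.graph.edgeSet := by
  have hV : ∀ z, z = u ∨ z = w := by
    refine (hG.exists_common_neighbor_or_eq huw).resolve_left fun ⟨x, hux, hwx⟩ => htre ?_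
    exact containsTrefoil_attachApexes_addVertexTwoEdges huw hu hw (z := .inl (some x)) (by simp)
      (by simpa using hux.symm) (by simpa using hwx.symm)
  have huwF : s(some u, some w) ∉ F := fun h => htre <|
    containsTrefoil_attachApexes_addVertexTwoEdges huw hu hw (z := .inr s(some u, some w))
      (by simp) (by simp [h]) (by simp [h])
  refine ⟨.star hV, RootedSpanningTree.isTwoSpanner_star hV, fun e he => ?_⟩
  induction e using Sym2.ind with | h a b => ?_
  have hab : (addVertexTwoEdges G u w).Adj a b := hF he
  rcases a with _ | a <;> rcases b with _ | b
  · exact (hab.ne rfl).elim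
  · simp
  · simp [adj_comm]
  · exfalso
    rcases hV a with rfl | rfl <;> rcases hV b with rfl | rfl
    exacts [hab.ne rfl, huwF he, huwF (Sym2.eq_swap ▸ he), hab.ne rfl]

open Classical in
/-- The apex over `uw` goes to the new vertex, unless `uw` carries an apex of its own. -/
noncomputable def attachApexesAddVertexHom (G : SimpleGraph V) (u w : V)
    (F : Set (Sym2 (Option V))) : G.attachApexes ({e | e.map some ∈ F} ∪ {s(u, w)}) →g
      (addVertexTwoEdges G u w).attachApexes F where
  toFun := Sum.elim (fun a => .inl (some a))
    fun e => if e = s(u, w) ∧ e.map some ∉ F then .inl none else .inr (e.map some)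
  map_rel' {x y} h := by
    have hapex : ∀ e a,
        (G.attachApexes ({e | e.map some ∈ F} ∪ {s(u, w)})).Adj (.inr e) (.inl a) →
          ((addVertexTwoEdges G u w).attachApexes F).Adj
            (if e = s(u, w) ∧ e.map some ∉ F then .inl none else .inr (e.map some))
            (.inl (some a)) := by
      rintro e a ⟨he, hae⟩
      split_ifs with hc
      · obtain ⟨rfl, -⟩ := hc
        simpa using hae
      · refine ⟨?_, Sym2.mem_map.2 ⟨a, hae, rfl⟩⟩
        rcases he with he | rfl
        exacts [he, not_and_not_right.1 hc rfl]
    rcases x with a | e <;> rcases y with b | e'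
    · simpa using h
    · exact (hapex e' a h.symm).symm
    · exact hapex e b h
    · exact h.elim

theorem attachApexesAddVertexHom_injective :
    Function.Injective (attachApexesAddVertexHom G u w F) := by
  rintro (a | e) (b | e') h <;> simp only [attachApexesAddVertexHom, RelHom.coeFn_mk,
    Sum.elim_inl, Sum.elim_inr] at h
  · simpa using h
  · split_ifs at h; simp at h
  · split_ifs at h; simp at h
  · split_ifs at h with h₁ h₂
    · rw [h₁.1, h₂.1]
    · exact congrArg _ (Sym2.map.injective (Option.some_injective _) (Sum.inr_injective h))

theorem exists_twoSpanner_addVertexTwoEdges_of_not_mem_mem (huw : G.Adj u w)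
    (hG : ForcedTwoSpanners G) (hF : F ⊆ (addVertexTwoEdges G u w).edgeSet)
    (htre : ¬ContainsTrefoil ((addVertexTwoEdges G u w).attachApexes F))
    (hnot : ¬(s(none, some u) ∈ F ∧ s(none, some w) ∈ F)) :
    ∃ T : (addVertexTwoEdges G u w).RootedSpanningTree, T.IsTwoSpanner ∧ F ⊆ T.graph.edgeSet := by
  have hF₀ : {e | e.map some ∈ F} ∪ {s(u, w)} ⊆ G.edgeSet := by
    rintro e (he | rfl)
    · induction e using Sym2.ind with | h a b => simpa using hF he
    · exact huw
  classical
  obtain ⟨T, hT, hFT⟩ :=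
    hG _ hF₀ fun h => htre (.map _ attachApexesAddVertexHom_injective h)
  set e₀ := if s(none, some w) ∈ F then w else u with he₀_def
  have he₀ : e₀ = u ∨ e₀ = w := by
    by_cases h : s(none, some w) ∈ F <;> simp [he₀_def, h]
  have hnew : ∀ b, s(none, some b) ∈ F → b = e₀ := by
    intro b hb
    obtain rfl | rfl := addVertexTwoEdges_adj_none_some.1 (hF hb)
    · have : s(none, some w) ∉ F := fun h => hnot ⟨hb, h⟩
      simp [he₀_def, this]
    · simp [he₀_def, hb]
  refine ⟨T.extend he₀, hT.extend he₀ (hFT (Or.inr rfl)), fun e he => ?_⟩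
  induction e using Sym2.ind with | h a b => ?_
  rcases a with _ | a <;> rcases b with _ | b
  · exact ((mem_edgeSet _).1 (hF he)).ne rfl |>.elim
  · simpa using hnew b he
  · simpa [adj_comm] using hnew a (Sym2.eq_swap ▸ he)
  · simpa using hFT (Or.inl (show s(a, b).map some ∈ F from he))

theorem ForcedTwoSpanners.addVertexTwoEdges (hG : Is2Tree G) (huw : G.Adj u w)
    (hforced : ForcedTwoSpanners G) : ForcedTwoSpanners (addVertexTwoEdges G u w) := by
  intro F hF htre
  by_cases h : s(none, some u) ∈ F ∧ s(none, some w) ∈ F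
  · exact exists_twoSpanner_addVertexTwoEdges_of_mem_mem hG huw hF htre h.1 h.2
  · exact exists_twoSpanner_addVertexTwoEdges_of_not_mem_mem huw hforced hF htre h

end addVertexTwoEdges

end SimpleGraph

open SimpleGraph in
theorem Is2Tree.forcedTwoSpanners {V : Type} {G : SimpleGraph V} (hG : Is2Tree G) :
    ForcedTwoSpanners G := by
  induction hG with
  | base => exact forcedTwoSpanners_top_fin_two
  | extend G u w huw hG ih => exact ih.addVertexTwoEdges hG huw
  | iso G H _ e ih => exact ih.of_iso e.some

open SimpleGraph in
theorem Is2Tree.exists_isTwoSpanner {V : Type} {G : SimpleGraph V} (hG : Is2Tree G)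
    (htre : ¬ContainsTrefoil G) : ∃ T : G.RootedSpanningTree, T.IsTwoSpanner := by
  have htre₀ : ¬ContainsTrefoil (G.attachApexes ∅) := by
    rw [attachApexes_empty]
    exact fun h => htre (.of_map _ h)
  obtain ⟨T, hT, -⟩ := hG.forcedTwoSpanners ∅ (Set.empty_subset _) htre₀
  exact ⟨T, hT⟩

/-- The Bestvina–Brady group of a trefoil-free 2-tree is a RAAG. -/
theorem stmt_7 {V : Type} [Fintype V] (G : SimpleGraph V)
    (h2 : Is2Tree G) (htre : ¬ContainsTrefoil G) :
    IsRAAG ↥(BBG G) := by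
  obtain ⟨T, hT⟩ := h2.exists_isTwoSpanner htre
  exact hT.isRAAG_bbg
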